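/- arXiv:1812.04167 — 4 statements merged into one kernel-verified Lean document; each statement's English description precedes it below -/
import Mathlib

section
/- Let G be a finite group, let N ≤ M be subgroups of G, let x ∈ G, and let p be a prime. Write o(x^{o(x,M)}, N) = p^α · v with p not dividing v. Then p^α divides the index [M : N]. -/
/-- `nOrd S x` is the smallest positive integer `k` such that `x ^ k ∈ S`. -/
noncomputable def nOrd {G : Type*} [Group G] (S : Set G) (x : G) : ℕ :=
  sInf {k : ℕ | 0 < k ∧ x ^ k ∈ S}

/-- `gOrd S x = gcd { nOrd S (g⁻¹ * x * g) : g ∈ G }`, the generalized order of `x`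
with respect to `S`. -/
noncomputable def gOrd {G : Type*} [Group G] [Fintype G] (S : Set G) (x : G) : ℕ :=
  Finset.univ.gcd fun g : G => nOrd S (g⁻¹ * x * g)

/-!
`nOrd N (g⁻¹ * y * g)` is the length of the orbit of the coset `gN` under `⟨y⟩`, so summing over
the orbits of `⟨y⟩` on `G ⧸ N`, a number dividing `nOrd N (g⁻¹ * y * g)` for every `g` divides
`[G : N]`.

Let `m = gOrd M x`. Some conjugate `w₀` of `x` has `nOrd M w₀ = m * s` with `p ∤ s`, since the
cofactors `nOrd M (g⁻¹ * x * g) / m` have gcd `1`. For `k ∈ M` the conjugate `w = k⁻¹ * w₀ * k`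
still has `nOrd M w = m * s`, and `nOrd N (w ^ m) = s * nOrd N (k⁻¹ * u * k)` with
`u = w₀ ^ (m * s) ∈ M`. Hence `p ^ α` divides `nOrd N (k⁻¹ * u * k)` for all `k ∈ M`, and the orbit
count inside `M` gives `p ^ α ∣ [M : N]`.
-/

open Function MulAction

theorem MulAction.dvd_card_of_forall_dvd_card_orbit {α X : Type*} [Group α] [MulAction α X]
    [Finite X] {d : ℕ} (h : ∀ b : X, d ∣ Nat.card (orbit α b)) : d ∣ Nat.card X := by
  have : Fintype (orbitRel.Quotient α X) := Fintype.ofFinite _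
  rw [Nat.card_congr (selfEquivSigmaOrbits α X), Nat.card_sigma]
  exact Finset.dvd_sum fun ω _ => h ω.out

section nOrd

variable {G : Type*} [Group G]

theorem inv_conj_pow (g x : G) (k : ℕ) : (g⁻¹ * x * g) ^ k = g⁻¹ * x ^ k * g := by
  simpa using conj_pow (a := g⁻¹) (b := x) (i := k)

theorem nOrd_conj_eq_minimalPeriod (N : Subgroup G) (x g : G) :
    nOrd (N : Set G) (g⁻¹ * x * g) = minimalPeriod (x • ·) (g : G ⧸ N) := by
  rw [minimalPeriod_eq_sInf_n_pos_IsPeriodicPt, nOrd]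
  congr 1
  ext k
  simp only [inv_conj_pow]
  simp only [mul_assoc, Set.mem_ofPred_eq, IsPeriodicPt, IsFixedPt, smul_iterate, Quotient.smul_coe,
    smul_eq_mul, eq_comm (b := (g : G ⧸ N)), QuotientGroup.eq, SetLike.mem_coe, gt_iff_lt]

theorem nOrd_eq_minimalPeriod (N : Subgroup G) (x : G) :
    nOrd (N : Set G) x = minimalPeriod (x • ·) ((1 : G) : G ⧸ N) := by
  simpa using nOrd_conj_eq_minimalPeriod N x 1

theorem nOrd_dvd_iff (N : Subgroup G) {x : G} {k : ℕ} : nOrd (N : Set G) x ∣ k ↔ x ^ k ∈ N := by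
  rw [nOrd_eq_minimalPeriod, ← isPeriodicPt_iff_minimalPeriod_dvd]
  simp [IsPeriodicPt, IsFixedPt, smul_iterate, eq_comm (b := ((1 : G) : G ⧸ N)),
    QuotientGroup.eq]

theorem pow_nOrd_mem (N : Subgroup G) (x : G) : x ^ nOrd (N : Set G) x ∈ N :=
  (nOrd_dvd_iff N).1 dvd_rfl

theorem nOrd_pos [Finite G] (N : Subgroup G) (x : G) : 0 < nOrd (N : Set G) x := by
  rw [nOrd_eq_minimalPeriod]
  exact Nat.pos_of_ne_zero (NeZero.ne _)

theorem nOrd_conj_of_mem {M : Subgroup G} {h : G} (hh : h ∈ M) (x : G) :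
    nOrd (M : Set G) (h⁻¹ * x * h) = nOrd (M : Set G) x := by
  have : (h : G ⧸ M) = ((1 : G) : G ⧸ M) := QuotientGroup.eq.2 (by simpa using hh)
  rw [nOrd_conj_eq_minimalPeriod, nOrd_eq_minimalPeriod, this]

theorem nOrd_pow (N : Subgroup G) (x : G) {k : ℕ} (hk : k ≠ 0) :
    nOrd (N : Set G) (x ^ k) = nOrd (N : Set G) x / (nOrd (N : Set G) x).gcd k := by
  rw [nOrd_eq_minimalPeriod, nOrd_eq_minimalPeriod, ← minimalPeriod_iterate_eq_div_gcd hk,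
    smul_iterate]

theorem nOrd_eq_mul_of_le [Finite G] {N M : Subgroup G} (hNM : N ≤ M) (x : G) :
    nOrd (N : Set G) x = nOrd (M : Set G) x * nOrd (N : Set G) (x ^ nOrd (M : Set G) x) := by
  have hdvd : nOrd (M : Set G) x ∣ nOrd (N : Set G) x := (nOrd_dvd_iff M).2 (hNM (pow_nOrd_mem N x))
  rw [nOrd_pow N x (nOrd_pos M x).ne', Nat.gcd_eq_right hdvd, Nat.mul_div_cancel' hdvd]

theorem nOrd_subgroupOf (N M : Subgroup G) (x : M) :
    nOrd (N.subgroupOf M : Set M) x = nOrd (N : Set G) x := by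
  simp [nOrd, Subgroup.mem_subgroupOf]

theorem dvd_index_of_forall_dvd_nOrd_conj [Finite G] (N : Subgroup G) (u : G) {d : ℕ}
    (h : ∀ g : G, d ∣ nOrd (N : Set G) (g⁻¹ * u * g)) : d ∣ N.index := by
  refine dvd_card_of_forall_dvd_card_orbit (α := Subgroup.zpowers u) fun b => ?_
  obtain ⟨g, rfl⟩ := QuotientGroup.mk_surjective b
  have hcard := Nat.card_congr (orbitZPowersEquiv u (g : G ⧸ N))
  rw [Nat.card_zmod, ← nOrd_conj_eq_minimalPeriod] at hcard
  exact hcard ▸ h g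

theorem dvd_relIndex_of_forall_dvd_nOrd_conj [Finite G] (N : Subgroup G) {M : Subgroup G}
    {u : G} (hu : u ∈ M) {d : ℕ} (h : ∀ g ∈ M, d ∣ nOrd (N : Set G) (g⁻¹ * u * g)) :
    d ∣ N.relIndex M :=
  dvd_index_of_forall_dvd_nOrd_conj (N.subgroupOf M) ⟨u, hu⟩ fun g => by
    simpa only [nOrd_subgroupOf, Subgroup.coe_mul, Subgroup.coe_inv] using h g g.2

end nOrd

theorem stmt4_general {G : Type*} [Group G] [Fintype G] (N M : Subgroup G) (hNM : N ≤ M) (x : G)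
    (p : ℕ) (hp : p.Prime) (α v : ℕ)
    (h : gOrd (N : Set G) (x ^ gOrd (M : Set G) x) = p ^ α * v) :
    p ^ α ∣ N.relIndex M := by
  set m := gOrd (M : Set G) x
  obtain ⟨s, hs, hs_gcd⟩ := Finset.extract_gcd
    (fun g : G => nOrd (M : Set G) (g⁻¹ * x * g)) Finset.univ_nonempty
  obtain ⟨g₀, hg₀⟩ : ∃ g₀, ¬ p ∣ s g₀ := by
    by_contra! hall
    exact hp.one_lt.ne' (Nat.dvd_one.1 (hs_gcd ▸ Finset.dvd_gcd fun g _ => hall g))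
  set w₀ := g₀⁻¹ * x * g₀
  have hw₀ : nOrd (M : Set G) w₀ = m * s g₀ := hs g₀ (Finset.mem_univ _)
  have hm : m ≠ 0 := left_ne_zero_of_mul (hw₀ ▸ (nOrd_pos M w₀).ne')
  refine dvd_relIndex_of_forall_dvd_nOrd_conj N (pow_nOrd_mem M w₀) fun k hk => ?_
  have hw : nOrd (M : Set G) (k⁻¹ * w₀ * k) = m * s g₀ := (nOrd_conj_of_mem hk w₀).trans hw₀
  have hdvd : p ^ α ∣ nOrd (N : Set G) ((k⁻¹ * w₀ * k) ^ m) := by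
    have hconj : k⁻¹ * w₀ * k = (g₀ * k)⁻¹ * x * (g₀ * k) := by simp only [w₀]; group
    rw [hconj, inv_conj_pow]
    exact (h ▸ dvd_mul_right _ _).trans (Finset.gcd_dvd (Finset.mem_univ (g₀ * k)))
  have hsplit : nOrd (N : Set G) ((k⁻¹ * w₀ * k) ^ m)
      = s g₀ * nOrd (N : Set G) (k⁻¹ * w₀ ^ nOrd (M : Set G) w₀ * k) := by
    rw [nOrd_eq_mul_of_le hNM, nOrd_pow M _ hm, hw, Nat.gcd_mul_right_left,
      Nat.mul_div_cancel_left _ (Nat.pos_of_ne_zero hm), ← pow_mul, hw₀, inv_conj_pow]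
  exact (Nat.Coprime.pow_left α ((Nat.Prime.coprime_iff_not_dvd hp).2 hg₀)).dvd_of_dvd_mul_left
    (hsplit ▸ hdvd)

theorem stmt4 {G : Type*} [Group G] [Fintype G] (N M : Subgroup G) (hNM : N ≤ M) (x : G)
    (p : ℕ) (hp : p.Prime) (α v : ℕ) (hv : ¬ p ∣ v)
    (h : gOrd (N : Set G) (x ^ gOrd (M : Set G) x) = p ^ α * v) :
    p ^ α ∣ N.relIndex M :=
  stmt4_general N M hNM x p hp α v h
end

section
/- Let G be a finite group, let N ≤ M be subgroups of G, and let x ∈ G. Then o(x, N) = o(x, M) · o(x^{o(x,M)}, N). (This expresses that the recursively defined order E(x,N) coincides with o(x,N).) -/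
section Aux

variable {G : Type*} [Group G] [Fintype G]

lemma nOrd_spec (N : Subgroup G) (x : G) :
    0 < nOrd (N : Set G) x ∧ x ^ nOrd (N : Set G) x ∈ N := by
  have h : orderOf x ∈ {k : ℕ | 0 < k ∧ x ^ k ∈ (N : Set G)} :=
    ⟨orderOf_pos x, by simp [pow_orderOf_eq_one, N.one_mem]⟩
  exact Nat.sInf_mem ⟨_, h⟩

lemma pow_mem_iff_nOrd_dvd (N : Subgroup G) (x : G) (k : ℕ) :
    x ^ k ∈ N ↔ nOrd (N : Set G) x ∣ k := by
  obtain ⟨hd, hmem⟩ := nOrd_spec N x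
  set d := nOrd (N : Set G) x with hdef
  constructor
  · intro hk
    have heq : x ^ (k % d) = x ^ k * ((x ^ d) ^ (k / d))⁻¹ := by
      rw [← pow_mul, eq_mul_inv_iff_mul_eq, ← pow_add, Nat.mod_add_div]
    have hmem' : x ^ (k % d) ∈ N :=
      heq ▸ N.mul_mem hk (N.inv_mem (N.pow_mem hmem _))
    rcases Nat.eq_zero_or_pos (k % d) with h0 | hpos
    · exact Nat.dvd_of_mod_eq_zero h0
    · exact absurd
        (Nat.sInf_le (show k % d ∈ {k : ℕ | 0 < k ∧ x ^ k ∈ (N : Set G)} from ⟨hpos, hmem'⟩))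
        (not_le.mpr (Nat.mod_lt k hd))
  · rintro ⟨c, rfl⟩
    rw [pow_mul]
    exact N.pow_mem hmem c

lemma mul_nOrd_pow (N : Subgroup G) (x : G) (a : ℕ)
    (hdvd : a ∣ nOrd (N : Set G) x) :
    a * nOrd (N : Set G) (x ^ a) = nOrd (N : Set G) x := by
  set d := nOrd (N : Set G) x with hddef
  set e := nOrd (N : Set G) (x ^ a) with hedef
  have key : ∀ k, e ∣ k ↔ d ∣ a * k := by
    intro k
    rw [hedef, hddef, ← pow_mem_iff_nOrd_dvd, ← pow_mem_iff_nOrd_dvd, ← pow_mul]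
  have h1 : d ∣ a * e := (key e).mp dvd_rfl
  have h2 : e ∣ d / a := (key (d / a)).mpr (by rw [Nat.mul_div_cancel' hdvd])
  have h3 : a * e ∣ d := by
    have := Nat.mul_dvd_mul_left a h2
    rwa [Nat.mul_div_cancel' hdvd] at this
  exact Nat.dvd_antisymm h3 h1

end Aux

theorem stmt5 {G : Type*} [Group G] [Fintype G] (N M : Subgroup G) (hNM : N ≤ M) (x : G) :
    gOrd (N : Set G) x = gOrd (M : Set G) x * gOrd (N : Set G) (x ^ gOrd (M : Set G) x) := by
  set a := gOrd (M : Set G) x with ha_def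
  have hdvd : ∀ g : G, a ∣ nOrd (N : Set G) (g⁻¹ * x * g) := by
    intro g
    refine dvd_trans (Finset.gcd_dvd (Finset.mem_univ g)) ?_
    exact (pow_mem_iff_nOrd_dvd M _ _).mp
      (hNM ((pow_mem_iff_nOrd_dvd N (g⁻¹ * x * g) _).mpr dvd_rfl))
  have hconj : ∀ g : G, g⁻¹ * x ^ a * g = (g⁻¹ * x * g) ^ a := by
    intro g
    have := conj_pow (i := a) (a := g⁻¹) (b := x)
    rw [inv_inv] at this; exact this.symm
  rw [gOrd, gOrd]
  calc Finset.univ.gcd (fun g : G => nOrd (N : Set G) (g⁻¹ * x * g))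
      = Finset.univ.gcd (fun g : G => a * nOrd (N : Set G) ((g⁻¹ * x * g) ^ a)) := by
        refine Finset.gcd_congr rfl fun g _ => ?_
        exact (mul_nOrd_pow N _ a (hdvd g)).symm
    _ = a * Finset.univ.gcd (fun g : G => nOrd (N : Set G) ((g⁻¹ * x * g) ^ a)) := by
        rw [Finset.gcd_mul_left]; simp
    _ = a * Finset.univ.gcd (fun g : G => nOrd (N : Set G) (g⁻¹ * x ^ a * g)) := by
        refine congrArg _ (Finset.gcd_congr rfl fun g _ => ?_)
        rw [hconj]
end

section
/- Let d, a_1, a_2, ..., a_k be positive integers with k > 1. If gcd(d, gcd(a_1, ..., a_k)) = 1, then gcd(a_1, ..., a_k) = gcd(a_1/gcd(d,a_1), ..., a_k/gcd(d,a_k)). -/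
theorem stmt6 (k : ℕ) (hk : 1 < k) (d : ℕ) (hd : 0 < d) (a : Fin k → ℕ)
    (ha : ∀ i, 0 < a i) (h : Nat.gcd d (Finset.univ.gcd a) = 1) :
    Finset.univ.gcd a = Finset.univ.gcd fun i => a i / Nat.gcd d (a i) := by
  apply Nat.dvd_antisymm
  · apply Finset.dvd_gcd
    intro i _
    have hc : Nat.Coprime (Finset.univ.gcd a) (Nat.gcd d (a i)) :=
      Nat.Coprime.coprime_dvd_right (Nat.gcd_dvd_left d (a i)) (Nat.Coprime.symm h)
    apply hc.dvd_of_dvd_mul_right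
    rw [Nat.div_mul_cancel (Nat.gcd_dvd_right d (a i))]
    exact Finset.gcd_dvd (Finset.mem_univ i)
  · apply Finset.dvd_gcd
    intro i _
    exact dvd_trans (Finset.gcd_dvd (Finset.mem_univ i)) (Nat.div_dvd_of_dvd (Nat.gcd_dvd_right d (a i)))
end

section
/- Let G be a finite group, p a prime, N a p-subgroup of G, and d a positive integer. Then { x ∈ G : o(x^d, N) = 1 } = { x ∈ G : there exists g ∈ G with x^d ∈ g⁻¹Ng }. -/
section Aux

variable {G : Type*} [Group G] [Fintype G] (N : Subgroup G)

lemma nOrd_mem (x : G) :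
    0 < nOrd (N : Set G) x ∧ x ^ nOrd (N : Set G) x ∈ (N : Set G) := by
  have hne : ({k : ℕ | 0 < k ∧ x ^ k ∈ (N : Set G)}).Nonempty :=
    ⟨orderOf x, orderOf_pos x, by rw [pow_orderOf_eq_one]; exact N.one_mem⟩
  exact Nat.sInf_mem hne

lemma nOrd_dvd {x : G} {k : ℕ} (hk : x ^ k ∈ N) : nOrd (N : Set G) x ∣ k := by
  obtain ⟨hpos, hmem⟩ := nOrd_mem N x
  set n := nOrd (N : Set G) x with hn
  have hr : x ^ (k % n) ∈ N := by
    have heq : x ^ k = (x ^ n) ^ (k / n) * x ^ (k % n) := by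
      rw [← pow_mul, ← pow_add, Nat.div_add_mod]
    have h1 : (x ^ n) ^ (k / n) * x ^ (k % n) ∈ N := heq ▸ hk
    have h2 : ((x ^ n) ^ (k / n))⁻¹ * ((x ^ n) ^ (k / n) * x ^ (k % n)) ∈ N :=
      N.mul_mem (N.inv_mem (N.pow_mem hmem _)) h1
    simpa using h2
  by_contra h
  have hrpos : 0 < k % n := Nat.pos_of_ne_zero fun h0 => h (Nat.dvd_of_mod_eq_zero h0)
  have hle : n ≤ k % n := Nat.sInf_le ⟨hrpos, hr⟩
  exact absurd (Nat.mod_lt k hpos) (not_lt.mpr hle)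

lemma mem_of_nOrd_eq_one {x : G} (h : nOrd (N : Set G) x = 1) : x ∈ N := by
  have hm := (nOrd_mem N x).2
  rw [h] at hm
  simpa using hm

lemma nOrd_eq_one {x : G} (hx : x ∈ N) : nOrd (N : Set G) x = 1 :=
  Nat.dvd_one.mp (nOrd_dvd N (by simpa using hx))

lemma orderOf_conj' (g x : G) : orderOf (g⁻¹ * x * g) = orderOf x := by
  have := orderOf_injective (MulAut.conj g⁻¹).toMonoidHom (MulAut.conj g⁻¹).injective x
  simpa [MulAut.conj_apply, mul_assoc] using this

end Aux

theorem stmt10 {G : Type*} [Group G] [Fintype G] (p : ℕ) (hp : p.Prime)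
    (N : Subgroup G) (hN : IsPGroup p N) (d : ℕ) (hd : 0 < d) :
    {x : G | gOrd (N : Set G) (x ^ d) = 1} =
      {x : G | ∃ g : G, g * x ^ d * g⁻¹ ∈ N} := by
  ext x
  simp only [Set.mem_setOf_eq]
  constructor
  · intro h1
    set m := orderOf (x ^ d) with hm
    have hmpos : 0 < m := orderOf_pos _
    -- basic facts for each g
    have key : ∀ g : G, ∃ j : ℕ, m = nOrd (N : Set G) (g⁻¹ * x ^ d * g) * p ^ j := by
      intro g
      set z := g⁻¹ * x ^ d * g with hz
      obtain ⟨hnpos, hnmem⟩ := nOrd_mem N z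
      set n := nOrd (N : Set G) z with hn
      have hnm : n ∣ orderOf z := nOrd_dvd N (by rw [pow_orderOf_eq_one]; exact N.one_mem)
      have horder : orderOf z = m := orderOf_conj' g (x ^ d)
      rw [horder] at hnm
      -- orderOf (z ^ n) is a p-power
      obtain ⟨k, hk⟩ := hN ⟨z ^ n, hnmem⟩
      have hk' : (z ^ n) ^ p ^ k = 1 := by
        have := congrArg (Subtype.val) hk
        simpa using this
      have hdvd : orderOf (z ^ n) ∣ p ^ k := orderOf_dvd_of_pow_eq_one hk'
      obtain ⟨j, _, hj⟩ := (Nat.dvd_prime_pow hp).mp hdvd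
      have hzn : orderOf (z ^ n) = m / n := by
        rw [orderOf_pow, horder, Nat.gcd_eq_right hnm]
      refine ⟨j, ?_⟩
      rw [← hj, hzn, Nat.mul_div_cancel' hnm]
    -- the p'-part of m divides every nOrd, hence divides the gcd = 1
    have hcomp : ordCompl[p] m = 1 := by
      have hdvd : ordCompl[p] m ∣ gOrd (N : Set G) (x ^ d) := by
        apply Finset.dvd_gcd
        intro g _
        obtain ⟨j, hj⟩ := key g
        have hco : (ordCompl[p] m).Coprime (p ^ j) :=
          (Nat.coprime_ordCompl hp hmpos.ne').symm.pow_right j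
        exact hco.dvd_of_dvd_mul_right (hj ▸ Nat.ordCompl_dvd m p)
      rw [h1] at hdvd
      exact Nat.dvd_one.mp hdvd
    have hmp : m = p ^ m.factorization p := by
      have := Nat.ordProj_mul_ordCompl_eq_self m p
      rw [hcomp, mul_one] at this
      exact this.symm
    -- now every nOrd is a p-power; if none is 1 then p divides all, contradiction
    by_contra hcon
    push_neg at hcon
    have hpd : p ∣ gOrd (N : Set G) (x ^ d) := by
      apply Finset.dvd_gcd
      intro g _
      obtain ⟨j, hj⟩ := key g
      set n := nOrd (N : Set G) (g⁻¹ * x ^ d * g) with hn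
      have hnm : n ∣ m := Dvd.intro _ hj.symm
      rw [hmp] at hnm
      obtain ⟨b, hb, hbn⟩ := (Nat.dvd_prime_pow hp).mp hnm
      have hne1 : n ≠ 1 := by
        intro h1'
        apply hcon g⁻¹
        have hmem : g⁻¹ * x ^ d * g ∈ N := mem_of_nOrd_eq_one N (hn ▸ h1')
        simpa using hmem
      have hbpos : 0 < b := by
        rcases Nat.eq_zero_or_pos b with h0 | h0
        · exact absurd (by simp [hbn, h0]) hne1
        · exact h0
      rw [hbn]
      exact dvd_pow_self p hbpos.ne'
    rw [h1] at hpd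
    exact hp.one_lt.ne' (Nat.dvd_one.mp hpd)
  · rintro ⟨g, hg⟩
    have h1 : nOrd (N : Set G) (g⁻¹⁻¹ * x ^ d * g⁻¹) = 1 := by
      apply nOrd_eq_one
      simpa [mul_assoc] using hg
    have : gOrd (N : Set G) (x ^ d) ∣ 1 := h1 ▸ Finset.gcd_dvd (Finset.mem_univ g⁻¹)
    exact Nat.dvd_one.mp this
end
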